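/- arXiv:1912.09679 — 6 statements merged into one kernel-verified Lean document; each statement's English description precedes it below -/
import Mathlib

section
/- Let a, b, r, F, ε, γ > 0, suppose D := (aγ − b + ε)² − 4aγε < 0, and let A be the real 2×2 matrix with rows (−a/ε, b/ε) and (−a/(γε), −(1/γ)(1 − b/ε)). Let λ₁ ∈ ℂ be the complex number (−aγ + b − ε − i√(−D))/(2γε) and v₁ ∈ ℂ² the vector ((aγ + b − ε + i√(−D))/(2a), 1)ᵀ. Then the real curves Φ₁(t) := Re(e^{λ₁ t} v₁) and Φ₂(t) := Im(e^{λ₁ t} v₁) both solve the homogeneous system Ẏ(t) = A·Y(t) for all t ∈ ℝ, and Φ₁(0), Φ₂(0) are linearly independent in ℝ², so Φ₁, Φ₂ form a solution basis. -/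
/-!
Because `A` is real, every `ℝ`-linear functional `L : ℂ → ℝ` applied componentwise intertwines
`A` acting on `ℂ²` with `A` acting on `ℝ²`. Hence, for an eigenpair `(λ, v)` of `A`, applying
`L = Re` or `L = Im` to the complex solution `e^{λt} v` gives a real solution. At `t = 0` these
are `Re v = (Re v₀, 1)` and `Im v = (√(-D)/(2a), 0)`, which are independent since `D < 0`.
-/

open Complex Matrix

theorem hasDerivAt_clm_cexp_mul_of_mulVec_eq_smul {ι : Type*} [Fintype ι]
    {A : Matrix ι ι ℝ} {μ : ℂ} {v : ι → ℂ} (hv : A.map ((↑) : ℝ → ℂ) *ᵥ v = μ • v)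
    (L : ℂ →L[ℝ] ℝ) (t : ℝ) :
    HasDerivAt (fun (s : ℝ) i => L (cexp (μ * s) * v i))
      (A *ᵥ fun i => L (cexp (μ * t) * v i)) t := by
  rw [hasDerivAt_pi]
  intro i
  have hexp : HasDerivAt (fun s : ℝ => cexp (μ * s) * v i) (μ * cexp (μ * t) * v i) t := by
    have := (((hasDerivAt_id (t : ℂ)).const_mul μ).cexp.comp_ofReal).mul_const (v i)
    simpa [mul_comm] using this
  refine (L.hasFDerivAt.comp_hasDerivAt t hexp).congr_deriv ?_
  have hvi : ∑ j, (A i j : ℂ) * v j = μ * v i := by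
    simpa [mulVec, dotProduct] using congrFun hv i
  symm
  calc (A *ᵥ fun j => L (cexp (μ * t) * v j)) i
      = L (cexp (μ * t) * ∑ j, (A i j : ℂ) * v j) := by
        simp only [mulVec, dotProduct, Finset.mul_sum, map_sum, ← smul_eq_mul (a := A i _),
          ← map_smul, real_smul, mul_left_comm]
    _ = L (μ * cexp (μ * t) * v i) := by rw [hvi]; ring_nf

theorem linearIndependent_pair_one_zero (x : ℝ) {y : ℝ} (hy : y ≠ 0) :
    LinearIndependent ℝ ![![x, 1], ![y, 0]] := by
  refine LinearIndependent.pair_iff.2 fun s t hst => ?_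
  have hs : s = 0 := by simpa using congrFun hst 1
  subst hs
  simpa [hy] using congrFun hst 0

theorem beja_goldman_mulVec_eigenvector {a b ε γ : ℝ} (ha : a ≠ 0) (hε : ε ≠ 0) (hγ : γ ≠ 0)
    {w : ℂ} (hw : w ^ 2 = (((a * γ - b + ε) ^ 2 - 4 * a * γ * ε : ℝ) : ℂ)) :
    (!![-a / ε, b / ε; -a / (γ * ε), -(1 / γ) * (1 - b / ε)]).map ((↑) : ℝ → ℂ) *ᵥ
        ![(((a * γ + b - ε : ℝ) : ℂ) + w) / ((2 * a : ℝ) : ℂ), 1] =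
      ((((-(a * γ) + b - ε : ℝ) : ℂ) - w) / ((2 * γ * ε : ℝ) : ℂ)) •
        ![(((a * γ + b - ε : ℝ) : ℂ) + w) / ((2 * a : ℝ) : ℂ), 1] := by
  have ha' : (a : ℂ) ≠ 0 := ofReal_ne_zero.2 ha
  have hε' : (ε : ℂ) ≠ 0 := ofReal_ne_zero.2 hε
  have hγ' : (γ : ℂ) ≠ 0 := ofReal_ne_zero.2 hγ
  push_cast at hw
  ext i
  fin_cases i <;>
    simp only [mulVec, dotProduct, Fin.sum_univ_two, Fin.zero_eta, Fin.mk_one, Fin.isValue,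
      map_apply, of_apply, cons_val', cons_val_fin_one, cons_val_zero, cons_val_one, Pi.smul_apply,
      smul_eq_mul, ofReal_sub, ofReal_add, ofReal_mul, ofReal_ofNat, ofReal_div, ofReal_neg,
      ofReal_one] <;>
    field_simp
  · linear_combination hw
  · ring

theorem beja_goldman_solution_basis_complex_general
    (a b ε γ : ℝ) (ha : 0 < a)
    (hε : 0 < ε) (hγ : 0 < γ)
    (D : ℝ) (hD : D = (a * γ - b + ε) ^ 2 - 4 * a * γ * ε) (hDneg : D < 0)
    (A : Matrix (Fin 2) (Fin 2) ℝ)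
    (hA : A = !![-a / ε, b / ε; -a / (γ * ε), -(1 / γ) * (1 - b / ε)])
    (lam1 : ℂ)
    (hlam1 : lam1 = (((-(a * γ) + b - ε : ℝ) : ℂ) - Complex.I * (Real.sqrt (-D) : ℂ))
        / ((2 * γ * ε : ℝ) : ℂ))
    (v1 : Fin 2 → ℂ)
    (hv1 : v1 = ![(((a * γ + b - ε : ℝ) : ℂ) + Complex.I * (Real.sqrt (-D) : ℂ))
        / ((2 * a : ℝ) : ℂ), 1])
    (Φ₁ Φ₂ : ℝ → Fin 2 → ℝ)
    (hΦ₁ : Φ₁ = fun (t : ℝ) i => (Complex.exp (lam1 * (t : ℂ)) * v1 i).re)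
    (hΦ₂ : Φ₂ = fun (t : ℝ) i => (Complex.exp (lam1 * (t : ℂ)) * v1 i).im) :
    (∀ t : ℝ, HasDerivAt Φ₁ (A.mulVec (Φ₁ t)) t) ∧
    (∀ t : ℝ, HasDerivAt Φ₂ (A.mulVec (Φ₂ t)) t) ∧
    LinearIndependent ℝ ![Φ₁ 0, Φ₂ 0] := by
  have hsqrt : Real.sqrt (-D) ^ 2 = -D := Real.sq_sqrt (neg_nonneg.2 hDneg.le)
  have hw : (I * (Real.sqrt (-D) : ℂ)) ^ 2 = (((a * γ - b + ε) ^ 2 - 4 * a * γ * ε : ℝ) : ℂ) := by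
    rw [mul_pow, I_sq, ← ofReal_pow, hsqrt, hD]; push_cast; ring
  have heigen : A.map ((↑) : ℝ → ℂ) *ᵥ v1 = lam1 • v1 := by
    subst hA hlam1 hv1
    exact beja_goldman_mulVec_eigenvector ha.ne' hε.ne' hγ.ne' hw
  have hΦ₁0 : Φ₁ 0 = ![(v1 0).re, 1] := by
    subst hΦ₁ hv1; ext i; fin_cases i <;> simp
  have hΦ₂0 : Φ₂ 0 = ![Real.sqrt (-D) / (2 * a), 0] := by
    subst hΦ₂ hv1
    ext i
    fin_cases i
    · simp only [Fin.zero_eta, ofReal_zero, mul_zero, Complex.exp_zero, one_mul, cons_val_zero,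
        div_ofReal_im]
      simp
    · simp
  subst hΦ₁ hΦ₂
  refine ⟨hasDerivAt_clm_cexp_mul_of_mulVec_eq_smul heigen reCLM,
    hasDerivAt_clm_cexp_mul_of_mulVec_eq_smul heigen imCLM, ?_⟩
  have hsqrt_pos : 0 < Real.sqrt (-D) := Real.sqrt_pos.2 (neg_pos.2 hDneg)
  rw [hΦ₁0, hΦ₂0]
  exact linearIndependent_pair_one_zero _ (by positivity)

/-- when `D < 0`, with complex eigenvalue `λ₁` and eigenvector `v₁`,
the real curves `Φ₁(t) = Re(e^{λ₁ t} v₁)` and `Φ₂(t) = Im(e^{λ₁ t} v₁)` solve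
`Ẏ = AY` and `Φ₁(0), Φ₂(0)` are linearly independent, forming a solution basis. -/
theorem beja_goldman_solution_basis_complex
    (a b r F ε γ : ℝ) (ha : 0 < a) (hb : 0 < b) (hr : 0 < r) (hF : 0 < F)
    (hε : 0 < ε) (hγ : 0 < γ)
    (D : ℝ) (hD : D = (a * γ - b + ε) ^ 2 - 4 * a * γ * ε) (hDneg : D < 0)
    (A : Matrix (Fin 2) (Fin 2) ℝ)
    (hA : A = !![-a / ε, b / ε; -a / (γ * ε), -(1 / γ) * (1 - b / ε)])
    (lam1 : ℂ)
    (hlam1 : lam1 = (((-(a * γ) + b - ε : ℝ) : ℂ) - Complex.I * (Real.sqrt (-D) : ℂ))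
        / ((2 * γ * ε : ℝ) : ℂ))
    (v1 : Fin 2 → ℂ)
    (hv1 : v1 = ![(((a * γ + b - ε : ℝ) : ℂ) + Complex.I * (Real.sqrt (-D) : ℂ))
        / ((2 * a : ℝ) : ℂ), 1])
    (Φ₁ Φ₂ : ℝ → Fin 2 → ℝ)
    (hΦ₁ : Φ₁ = fun (t : ℝ) i => (Complex.exp (lam1 * (t : ℂ)) * v1 i).re)
    (hΦ₂ : Φ₂ = fun (t : ℝ) i => (Complex.exp (lam1 * (t : ℂ)) * v1 i).im) :
    (∀ t : ℝ, HasDerivAt Φ₁ (A.mulVec (Φ₁ t)) t) ∧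
    (∀ t : ℝ, HasDerivAt Φ₂ (A.mulVec (Φ₂ t)) t) ∧
    LinearIndependent ℝ ![Φ₁ 0, Φ₂ 0] :=
  beja_goldman_solution_basis_complex_general a b ε γ ha hε hγ D hD hDneg A hA lam1 hlam1 v1 hv1 Φ₁
    Φ₂ hΦ₁ hΦ₂
end

section
/- Let a, b, r, F, ε, γ > 0 and let A be the real 2×2 matrix with rows (−a/ε, b/ε) and (−a/(γε), −(1/γ)(1 − b/ε)). Then every complex eigenvalue of A (viewed as a complex matrix) has strictly negative real part if and only if a > (b − ε)/γ. -/
/-!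
The eigenvalues of a real `2 × 2` matrix `A` are the roots of `z² - (tr A) z + det A`, and by the
Routh–Hurwitz criterion in degree two both roots of `z² + S z + D` lie in the open left half-plane
iff `S > 0` and `D > 0`. For the Beja–Goldman matrix `det A = a / (γ ε) > 0` always, while
`-tr A = (a γ + ε - b) / (γ ε)` is positive exactly when `a > (b - ε) / γ`.
-/

theorem Matrix.mem_spectrum_fin_two_iff {K : Type*} [Field K] (M : Matrix (Fin 2) (Fin 2) K)
    (z : K) : z ∈ spectrum K M ↔ z ^ 2 - M.trace * z + M.det = 0 := by
  simp [Matrix.mem_spectrum_iff_isRoot_charpoly, Matrix.charpoly_fin_two]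

theorem Complex.re_neg_of_quadratic_eq_zero {S D : ℝ} (hS : 0 < S) (hD : 0 < D) {z : ℂ}
    (hz : z ^ 2 + S * z + D = 0) : z.re < 0 := by
  have hre : z.re ^ 2 - z.im ^ 2 + S * z.re + D = 0 := by
    simpa [sq] using congrArg Complex.re hz
  have him : z.im * (2 * z.re + S) = 0 := by
    have := congrArg Complex.im hz
    simp only [sq, Complex.add_im, Complex.mul_im, Complex.ofReal_re, Complex.ofReal_im,
      Complex.zero_im] at this
    linear_combination this
  rcases mul_eq_zero.mp him with hy | hx
  · by_contra! hx
    rw [hy] at hre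
    nlinarith
  · linarith

theorem Complex.forall_re_neg_of_quadratic_eq_zero_iff (S D : ℝ) :
    (∀ z : ℂ, z ^ 2 + S * z + D = 0 → z.re < 0) ↔ 0 < S ∧ 0 < D := by
  refine ⟨fun h => ?_, fun ⟨hS, hD⟩ _ => re_neg_of_quadratic_eq_zero hS hD⟩
  rcases le_or_gt 0 (S ^ 2 - 4 * D) with hΔ | hΔ
  · set s := √(S ^ 2 - 4 * D)
    have hs : s ^ 2 = S ^ 2 - 4 * D := Real.sq_sqrt hΔ
    have hroot : ((-S + s) / 2) ^ 2 + S * ((-S + s) / 2) + D = 0 := by linear_combination hs / 4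
    have hneg : (-S + s) / 2 < 0 := by
      simpa using h ((-S + s) / 2 : ℝ) (by exact_mod_cast congrArg Complex.ofReal hroot)
    have hs0 : 0 ≤ s := Real.sqrt_nonneg _
    exact ⟨by linarith, by nlinarith⟩
  · set s := √(4 * D - S ^ 2)
    have hs : s ^ 2 = 4 * D - S ^ 2 := Real.sq_sqrt (by linarith)
    have hroot : (⟨-S / 2, s / 2⟩ : ℂ) ^ 2 + S * ⟨-S / 2, s / 2⟩ + D = 0 := by
      apply Complex.ext <;>
        simp only [sq, add_re, add_im, mul_re, mul_im, ofReal_re, ofReal_im, zero_re, zero_im,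
          zero_mul, sub_zero, add_zero]
      · linear_combination -hs / 4
      · ring
    have hS : 0 < S := by linarith [h _ hroot]
    exact ⟨hS, by nlinarith⟩

theorem Complex.forall_re_neg_of_mem_spectrum_fin_two_iff (A : Matrix (Fin 2) (Fin 2) ℝ) :
    (∀ z ∈ spectrum ℂ (A.map (Complex.ofReal ·)), z.re < 0) ↔ 0 < -A.trace ∧ 0 < A.det := by
  have htrace : (A.map (Complex.ofReal ·)).trace = A.trace :=
    (AddMonoidHom.map_trace Complex.ofRealHom A).symm
  have hdet : (A.map (Complex.ofReal ·)).det = A.det := (RingHom.map_det Complex.ofRealHom A).symm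
  rw [← forall_re_neg_of_quadratic_eq_zero_iff]
  refine forall_congr' fun z => ?_
  rw [Matrix.mem_spectrum_fin_two_iff, htrace, hdet, Complex.ofReal_neg, neg_mul, ← sub_eq_add_neg]

theorem beja_goldman_stability_general
    (a b ε γ : ℝ) (ha : 0 < a)
    (hε : 0 < ε) (hγ : 0 < γ)
    (A : Matrix (Fin 2) (Fin 2) ℝ)
    (hA : A = !![-a / ε, b / ε; -a / (γ * ε), -(1 / γ) * (1 - b / ε)]) :
    (∀ lam : ℂ, lam ∈ spectrum ℂ (A.map (Complex.ofReal ·)) → lam.re < 0) ↔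
      a > (b - ε) / γ := by
  have htrace : -A.trace = (a * γ + ε - b) / (γ * ε) := by
    rw [hA, Matrix.trace_fin_two_of]; field_simp; ring
  have hdet : A.det = a / (γ * ε) := by
    rw [hA, Matrix.det_fin_two_of]; field_simp; ring
  rw [Complex.forall_re_neg_of_mem_spectrum_fin_two_iff, htrace, hdet,
    and_iff_left (by positivity), div_pos_iff_of_pos_right (by positivity), gt_iff_lt,
    div_lt_iff₀ hγ]
  constructor <;> intro h <;> linarith

/-- every complex eigenvalue of the Beja–Goldman matrix has strictly
negative real part iff `a > (b - ε)/γ` (stability criterion). -/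
theorem beja_goldman_stability
    (a b r F ε γ : ℝ) (ha : 0 < a) (hb : 0 < b) (hr : 0 < r) (hF : 0 < F)
    (hε : 0 < ε) (hγ : 0 < γ)
    (A : Matrix (Fin 2) (Fin 2) ℝ)
    (hA : A = !![-a / ε, b / ε; -a / (γ * ε), -(1 / γ) * (1 - b / ε)]) :
    (∀ lam : ℂ, lam ∈ spectrum ℂ (A.map (Complex.ofReal ·)) → lam.re < 0) ↔
      a > (b - ε) / γ :=
  beja_goldman_stability_general a b ε γ ha hε hγ A hA
end

section
/- Let a, b, r, F, ε, γ > 0 with a > (b − ε)/γ, and let P, Ψ : ℝ → ℝ be differentiable functions satisfying, for all t ≥ 0, P'(t) = (1/ε)(a(F − P(t)) + b(Ψ(t) − r)) and Ψ'(t) = (1/γ)(P'(t) − Ψ(t)). Then P(t) → F − (b/a)·r and Ψ(t) → 0 as t → ∞. -/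
/-!
Shifting `P` by its equilibrium value turns the model into a planar linear system `v' = A v`
with `tr A = ((b - ε)/γ - a)/ε < 0` (this is the stability condition) and `det A = a/(εγ) > 0`.
For such a Hurwitz matrix the quadratic form `V(v) = det A · |v|² + |adj A · v|²` is a strict
Lyapunov function, `V' = 2 tr A · det A · |v|² ≤ K V` with `K < 0`, so Grönwall's inequality
gives exponential decay of `V`, hence of `v`.
-/

open Filter Topology Real

theorem le_mul_exp_of_hasDerivAt_le_mul {V V' : ℝ → ℝ} {K : ℝ}
    (hV : ∀ t ≥ (0 : ℝ), HasDerivAt V (V' t) t) (hV' : ∀ t ≥ (0 : ℝ), V' t ≤ K * V t)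
    {t : ℝ} (ht : 0 ≤ t) : V t ≤ V 0 * exp (K * t) := by
  have hcont : ContinuousOn V (Set.Icc 0 t) := fun τ hτ =>
    (hV τ hτ.1).continuousAt.continuousWithinAt
  have hslope : ∀ τ ∈ Set.Ico 0 t, ∀ r, V' τ < r →
      ∃ᶠ z in 𝓝[>] τ, (z - τ)⁻¹ * (V z - V τ) < r := fun τ hτ _ hr =>
    (hV τ hτ.1).hasDerivWithinAt.liminf_right_slope_le hr
  have h := le_gronwallBound_of_liminf_deriv_right_le (δ := V 0) (K := K) (ε := 0) hcont hslope
    le_rfl (fun τ hτ => (add_zero (K * V τ)).symm ▸ hV' τ hτ.1) t ⟨ht, le_rfl⟩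
  rwa [sub_zero, gronwallBound_ε0] at h

theorem tendsto_zero_of_hasDerivAt_le_mul_of_neg {V V' : ℝ → ℝ} {K : ℝ} (hK : K < 0)
    (hV0 : ∀ t, 0 ≤ V t) (hV : ∀ t ≥ (0 : ℝ), HasDerivAt V (V' t) t)
    (hV' : ∀ t ≥ (0 : ℝ), V' t ≤ K * V t) : Tendsto V atTop (𝓝 0) := by
  have hexp : Tendsto (fun t => V 0 * exp (K * t)) atTop (𝓝 0) := by
    simpa using (tendsto_exp_atBot.comp (tendsto_id.const_mul_atTop_of_neg hK)).const_mul (V 0)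
  refine squeeze_zero' (Eventually.of_forall hV0) ?_ hexp
  filter_upwards [eventually_ge_atTop 0] with t ht
  exact le_mul_exp_of_hasDerivAt_le_mul hV hV' ht

theorem tendsto_zero_of_mul_sq_le {f V : ℝ → ℝ} {d : ℝ} (hd : 0 < d)
    (hfV : ∀ t, d * f t ^ 2 ≤ V t) (hV : Tendsto V atTop (𝓝 0)) : Tendsto f atTop (𝓝 0) := by
  have hsqrt : Tendsto (fun t => √(V t / d)) atTop (𝓝 0) := by
    simpa using (hV.div_const d).sqrt
  refine squeeze_zero_norm (fun t => abs_le_sqrt ?_) hsqrt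
  rw [le_div_iff₀ hd, mul_comm]
  exact hfV t

section PlanarLyapunov

variable (p q s u : ℝ)

/-- `vᵀ M v` for `A = !![p, q; s, u]` and `M = det A · I + (adj A)ᵀ adj A`, which solves
`Aᵀ M + M A = 2 tr A · det A · I` because `A + adj A = tr A · I` and `adj A · A = det A · I`. -/
def planarLyapunov (x y : ℝ) : ℝ :=
  (p * u - q * s) * (x ^ 2 + y ^ 2) + (u * x - q * y) ^ 2 + (s * x - p * y) ^ 2

theorem det_mul_sq_le_planarLyapunov (x y : ℝ) :
    (p * u - q * s) * (x ^ 2 + y ^ 2) ≤ planarLyapunov p q s u x y := by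
  unfold planarLyapunov
  nlinarith [sq_nonneg (u * x - q * y), sq_nonneg (s * x - p * y)]

theorem planarLyapunov_le (x y : ℝ) :
    planarLyapunov p q s u x y ≤
      (p * u - q * s + p ^ 2 + q ^ 2 + s ^ 2 + u ^ 2) * (x ^ 2 + y ^ 2) := by
  unfold planarLyapunov
  nlinarith [sq_nonneg (u * y + q * x), sq_nonneg (s * y + p * x)]

theorem hasDerivAt_planarLyapunov {x y : ℝ → ℝ} {t : ℝ}
    (hx : HasDerivAt x (p * x t + q * y t) t) (hy : HasDerivAt y (s * x t + u * y t) t) :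
    HasDerivAt (fun t => planarLyapunov p q s u (x t) (y t))
      (2 * (p + u) * (p * u - q * s) * (x t ^ 2 + y t ^ 2)) t := by
  unfold planarLyapunov
  refine ((((hx.pow 2).add (hy.pow 2)).const_mul (p * u - q * s)).add
    (((hx.const_mul u).sub (hy.const_mul q)).pow 2) |>.add
    (((hx.const_mul s).sub (hy.const_mul p)).pow 2)).congr_deriv ?_
  simp only [Pi.sub_apply, Nat.cast_ofNat]
  ring

theorem tendsto_zero_of_trace_neg_of_det_pos (hτ : p + u < 0) (hΔ : 0 < p * u - q * s)
    {x y : ℝ → ℝ} (hx : ∀ t ≥ (0 : ℝ), HasDerivAt x (p * x t + q * y t) t)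
    (hy : ∀ t ≥ (0 : ℝ), HasDerivAt y (s * x t + u * y t) t) :
    Tendsto x atTop (𝓝 0) ∧ Tendsto y atTop (𝓝 0) := by
  have hT : 0 < p * u - q * s + p ^ 2 + q ^ 2 + s ^ 2 + u ^ 2 := by positivity
  set T := p * u - q * s + p ^ 2 + q ^ 2 + s ^ 2 + u ^ 2
  have hK : 2 * (p + u) * (p * u - q * s) / T < 0 := div_neg_of_neg_of_pos (by nlinarith) hT
  have hdecay : Tendsto (fun t => planarLyapunov p q s u (x t) (y t)) atTop (𝓝 0) := by
    refine tendsto_zero_of_hasDerivAt_le_mul_of_neg hK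
      (fun t => (mul_nonneg hΔ.le (by positivity)).trans
        (det_mul_sq_le_planarLyapunov p q s u _ _))
      (fun t ht => hasDerivAt_planarLyapunov p q s u (hx t ht) (hy t ht)) fun t _ => ?_
    calc 2 * (p + u) * (p * u - q * s) * (x t ^ 2 + y t ^ 2)
        = 2 * (p + u) * (p * u - q * s) / T * (T * (x t ^ 2 + y t ^ 2)) := by field_simp
      _ ≤ _ := mul_le_mul_of_nonpos_left (planarLyapunov_le p q s u _ _) hK.le
  have hx_sq (t : ℝ) : (p * u - q * s) * x t ^ 2 ≤ planarLyapunov p q s u (x t) (y t) := by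
    nlinarith [det_mul_sq_le_planarLyapunov p q s u (x t) (y t), sq_nonneg (y t)]
  have hy_sq (t : ℝ) : (p * u - q * s) * y t ^ 2 ≤ planarLyapunov p q s u (x t) (y t) := by
    nlinarith [det_mul_sq_le_planarLyapunov p q s u (x t) (y t), sq_nonneg (x t)]
  exact ⟨tendsto_zero_of_mul_sq_le hΔ hx_sq hdecay, tendsto_zero_of_mul_sq_le hΔ hy_sq hdecay⟩

end PlanarLyapunov

theorem beja_goldman_convergence_general
    (a b r F ε γ : ℝ) (ha : 0 < a)
    (hε : 0 < ε) (hγ : 0 < γ) (hstab : a > (b - ε) / γ)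
    (P Ψ : ℝ → ℝ)
    (hP : ∀ t ≥ (0 : ℝ),
      HasDerivAt P ((1 / ε) * (a * (F - P t) + b * (Ψ t - r))) t)
    (hΨ : ∀ t ≥ (0 : ℝ),
      HasDerivAt Ψ ((1 / γ) * (deriv P t - Ψ t)) t) :
    Tendsto P atTop (nhds (F - (b / a) * r)) ∧ Tendsto Ψ atTop (nhds 0) := by
  set Peq := F - (b / a) * r
  have htrace : -(a / ε) + (b - ε) / (ε * γ) < 0 := by
    have : -(a / ε) + (b - ε) / (ε * γ) = ((b - ε) / γ - a) / ε := by field_simp; ring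
    rw [this]; exact div_neg_of_neg_of_pos (by linarith) hε
  have hdet : 0 < -(a / ε) * ((b - ε) / (ε * γ)) - b / ε * -(a / (ε * γ)) := by
    have : -(a / ε) * ((b - ε) / (ε * γ)) - b / ε * -(a / (ε * γ)) = a / (ε * γ) := by
      field_simp; ring
    rw [this]; positivity
  have hx (t : ℝ) (ht : t ≥ 0) : HasDerivAt (fun t => P t - Peq)
      (-(a / ε) * (P t - Peq) + b / ε * Ψ t) t :=
    ((hP t ht).sub_const Peq).congr_deriv (by simp only [Peq]; field_simp; ring)
  have hy (t : ℝ) (ht : t ≥ 0) : HasDerivAt Ψ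
      (-(a / (ε * γ)) * (P t - Peq) + (b - ε) / (ε * γ) * Ψ t) t :=
    (hΨ t ht).congr_deriv (by rw [(hP t ht).deriv]; simp only [Peq]; field_simp; ring)
  obtain ⟨hPdev, hΨ0⟩ := tendsto_zero_of_trace_neg_of_det_pos _ _ _ _ htrace hdet hx hy
  exact ⟨by simpa using hPdev.add_const Peq, hΨ0⟩

/-- in the stable regime `a > (b - ε)/γ`, every solution of the
Beja–Goldman system converges: `P(t) → F - (b/a)r` and `Ψ(t) → 0` as `t → ∞`. -/
theorem beja_goldman_convergence
    (a b r F ε γ : ℝ) (ha : 0 < a) (hb : 0 < b) (hr : 0 < r) (hF : 0 < F)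
    (hε : 0 < ε) (hγ : 0 < γ) (hstab : a > (b - ε) / γ)
    (P Ψ : ℝ → ℝ) (hPdiff : Differentiable ℝ P) (hΨdiff : Differentiable ℝ Ψ)
    (hP : ∀ t ≥ (0 : ℝ),
      HasDerivAt P ((1 / ε) * (a * (F - P t) + b * (Ψ t - r))) t)
    (hΨ : ∀ t ≥ (0 : ℝ),
      HasDerivAt Ψ ((1 / γ) * (deriv P t - Ψ t)) t) :
    Tendsto P atTop (nhds (F - (b / a) * r)) ∧ Tendsto Ψ atTop (nhds 0) :=
  beja_goldman_convergence_general a b r F ε γ ha hε hγ hstab P Ψ hP hΨ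
end

section
/- Let a, b, r, F, ε, γ > 0 with a < (b − ε)/γ. Then there exist differentiable functions P, Ψ : ℝ → ℝ satisfying, for all t ≥ 0, P'(t) = (1/ε)(a(F − P(t)) + b(Ψ(t) − r)) and Ψ'(t) = (1/γ)(P'(t) − Ψ(t)), such that the solution is unbounded, i.e. sup over t ≥ 0 of |P(t)| + |Ψ(t)| is infinite. -/
/-!
The system is linear with equilibrium `(F - b r / a, 0)`, and `γ ε` times its characteristic
polynomial is `γ ε μ² - (b - ε - a γ) μ + a`. In the regime
`a γ < b - ε` its roots have positive sum, so one of them, `μ`, has `Re μ > 0`. With the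
eigenvector `(1, w)`, `w = (a + ε μ) / b`, the real parts of `e^{μ t} (1, w)` shifted by the
equilibrium solve the system, and `Re e^{μ t} = e^{t Re μ} cos (t Im μ)` is unbounded at the
times where the cosine equals `1`.
-/

open Filter Complex

theorem Function.Periodic.frequently_eq_atTop {α β : Type*} [Field α] [LinearOrder α]
    [IsStrictOrderedRing α] [Archimedean α] {f : α → β} {c : α} (h : Function.Periodic f c)
    (hc : c ≠ 0) : ∃ᶠ t in atTop, f t = f 0 := by
  have habs : Function.Periodic f |c| := by
    rcases abs_choice c with hc' | hc' <;> rw [hc']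
    exacts [h, h.neg]
  rw [frequently_atTop]
  intro T
  obtain ⟨n, hn⟩ := exists_nat_ge (T / |c|)
  exact ⟨n * |c|, (div_le_iff₀ (abs_pos.mpr hc)).mp hn, habs.nat_mul_eq n⟩

theorem frequently_cos_mul_eq_one (β : ℝ) : ∃ᶠ t in atTop, Real.cos (β * t) = 1 := by
  rcases eq_or_ne β 0 with rfl | hβ
  · simpa using atTop_neBot
  · simpa using (Real.cos_periodic.const_mul β).frequently_eq_atTop
      (mul_ne_zero (inv_ne_zero hβ) Real.two_pi_pos.ne')

theorem exists_lt_re_cexp_mul {μ : ℂ} (hμ : 0 < μ.re) (M : ℝ) :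
    ∃ t ≥ (0 : ℝ), M < (cexp (μ * t)).re := by
  have hexp : Tendsto (fun t : ℝ => Real.exp (μ.re * t)) atTop atTop :=
    Real.tendsto_exp_atTop.comp (tendsto_id.const_mul_atTop hμ)
  obtain ⟨t, hcos, hlt, ht⟩ := ((frequently_cos_mul_eq_one μ.im).and_eventually
    ((hexp.eventually_gt_atTop M).and (eventually_ge_atTop 0))).exists
  refine ⟨t, ht, ?_⟩
  simpa [Complex.exp_re, hcos] using hlt

theorem hasDerivAt_re_mul_cexp_mul (w μ : ℂ) (t : ℝ) :
    HasDerivAt (fun s : ℝ => (w * cexp (μ * s)).re) (w * μ * cexp (μ * t)).re t := by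
  have h : HasDerivAt (fun z : ℂ => w * cexp (μ * z)) (w * (μ * cexp (μ * t))) t := by
    simpa [mul_comm] using ((hasDerivAt_id (t : ℂ)).const_mul μ).cexp.const_mul w
  simpa [mul_assoc] using h.real_of_complex

theorem exists_quadratic_root_re_pos {A c : ℝ} (hA : 0 < A) (hc : 0 < c) (a : ℝ) :
    ∃ μ : ℂ, 0 < μ.re ∧ A * μ ^ 2 - c * μ + a = 0 := by
  obtain ⟨s, hs⟩ := IsAlgClosed.exists_eq_mul_self (discrim (A : ℂ) (-c) a)
  have hA' : (A : ℂ) ≠ 0 := by exact_mod_cast hA.ne'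
  have hroot (μ : ℂ) (hμ : μ = (c + s) / (2 * A) ∨ μ = (c - s) / (2 * A)) :
      A * μ ^ 2 - c * μ + a = 0 := by
    linear_combination (quadratic_eq_zero_iff hA' hs μ).mpr (by simpa using hμ)
  have hsum : ((c + s) / (2 * A)).re + ((c - s) / (2 * A)).re = c / A := by
    have : (c + s) / (2 * A) + (c - s) / (2 * A) = ((c / A : ℝ) : ℂ) := by
      push_cast
      field_simp
      ring
    rw [← Complex.add_re, this, Complex.ofReal_re]
  by_cases h : 0 < ((c + s) / (2 * A)).re
  · exact ⟨_, h, hroot _ (Or.inl rfl)⟩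
  · refine ⟨_, ?_, hroot _ (Or.inr rfl)⟩
    linarith [div_pos hc hA]

section BejaGoldman

variable {a b ε γ : ℝ} {μ w : ℂ}

theorem beja_goldman_price_rhs_eq (F r : ℝ) (ha : a ≠ 0) (hε : ε ≠ 0)
    (hw : ε * μ = b * w - a) (z : ℂ) :
    (1 / ε) * (a * (F - (F - b * r / a + z.re)) + b * ((w * z).re - r)) = (μ * z).re := by
  have hre : ε * (μ * z).re = b * (w * z).re - a * z.re := by
    rw [← re_ofReal_mul, ← mul_assoc, hw, sub_mul, sub_re, mul_assoc, re_ofReal_mul,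
      re_ofReal_mul]
  rw [one_div, inv_mul_eq_iff_eq_mul₀ hε]
  linear_combination mul_div_cancel₀ (b * r) ha - hre

theorem hasDerivAt_beja_goldman_price (F r : ℝ) (ha : a ≠ 0) (hε : ε ≠ 0)
    (hw : ε * μ = b * w - a) (t : ℝ) :
    HasDerivAt (fun s : ℝ => F - b * r / a + (cexp (μ * s)).re)
      ((1 / ε) * (a * (F - (F - b * r / a + (cexp (μ * t)).re))
        + b * ((w * cexp (μ * t)).re - r))) t := by
  rw [beja_goldman_price_rhs_eq F r ha hε hw]
  simpa using (hasDerivAt_re_mul_cexp_mul 1 μ t).const_add (F - b * r / a)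

theorem hasDerivAt_beja_goldman_trend (F r : ℝ) (ha : a ≠ 0) (hε : ε ≠ 0) (hγ : γ ≠ 0)
    (hw₁ : ε * μ = b * w - a) (hw₂ : γ * (w * μ) = μ - w) (t : ℝ) :
    HasDerivAt (fun s : ℝ => (w * cexp (μ * s)).re)
      ((1 / γ) * ((1 / ε) * (a * (F - (F - b * r / a + (cexp (μ * t)).re))
        + b * ((w * cexp (μ * t)).re - r)) - (w * cexp (μ * t)).re)) t := by
  rw [beja_goldman_price_rhs_eq F r ha hε hw₁, ← sub_re, ← sub_mul, ← hw₂, mul_assoc (γ : ℂ),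
    re_ofReal_mul, one_div, inv_mul_cancel_left₀ hγ]
  exact hasDerivAt_re_mul_cexp_mul w μ t

end BejaGoldman

theorem beja_goldman_unstable_general
    (a b r F ε γ : ℝ) (ha : 0 < a) (hb : 0 < b)
    (hε : 0 < ε) (hγ : 0 < γ) (hunst : a < (b - ε) / γ) :
    ∃ P Ψ : ℝ → ℝ, Differentiable ℝ P ∧ Differentiable ℝ Ψ ∧
      (∀ t ≥ (0 : ℝ),
        HasDerivAt P ((1 / ε) * (a * (F - P t) + b * (Ψ t - r))) t) ∧
      (∀ t ≥ (0 : ℝ),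
        HasDerivAt Ψ ((1 / γ) * (deriv P t - Ψ t)) t) ∧
      (∀ M : ℝ, ∃ t ≥ (0 : ℝ), M < |P t| + |Ψ t|) := by
  have hc : 0 < b - ε - a * γ := by linarith [(lt_div_iff₀ hγ).mp hunst]
  obtain ⟨μ, hμ, hroot⟩ := exists_quadratic_root_re_pos (mul_pos hγ hε) hc a
  have hb' : (b : ℂ) ≠ 0 := by exact_mod_cast hb.ne'
  set w : ℂ := (a + ε * μ) / b with hw
  have hw₁ : (ε : ℂ) * μ = b * w - a := by rw [hw]; field_simp; ring
  have hw₂ : (γ : ℂ) * (w * μ) = μ - w := by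
    rw [hw]
    field_simp
    push_cast at hroot
    linear_combination hroot
  have hP := hasDerivAt_beja_goldman_price F r ha.ne' hε.ne' hw₁
  have hΨ := hasDerivAt_beja_goldman_trend F r ha.ne' hε.ne' hγ.ne' hw₁ hw₂
  refine ⟨_, _, fun t => (hP t).differentiableAt, fun t => (hΨ t).differentiableAt,
    fun t _ => hP t, fun t _ => (hP t).deriv ▸ hΨ t, fun M => ?_⟩
  obtain ⟨t, ht, hlt⟩ := exists_lt_re_cexp_mul hμ (M + |F - b * r / a|)
  refine ⟨t, ht, ?_⟩
  linarith [neg_abs_le (F - b * r / a), le_abs_self (F - b * r / a + (cexp (μ * t)).re),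
    abs_nonneg (w * cexp (μ * t)).re]

/-- in the unstable regime `a < (b - ε)/γ` there exists an unbounded
solution of the Beja–Goldman system. -/
theorem beja_goldman_unstable
    (a b r F ε γ : ℝ) (ha : 0 < a) (hb : 0 < b) (hr : 0 < r) (hF : 0 < F)
    (hε : 0 < ε) (hγ : 0 < γ) (hunst : a < (b - ε) / γ) :
    ∃ P Ψ : ℝ → ℝ, Differentiable ℝ P ∧ Differentiable ℝ Ψ ∧
      (∀ t ≥ (0 : ℝ),
        HasDerivAt P ((1 / ε) * (a * (F - P t) + b * (Ψ t - r))) t) ∧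
      (∀ t ≥ (0 : ℝ),
        HasDerivAt Ψ ((1 / γ) * (deriv P t - Ψ t)) t) ∧
      (∀ M : ℝ, ∃ t ≥ (0 : ℝ), M < |P t| + |Ψ t|) :=
  beja_goldman_unstable_general a b r F ε γ ha hb hε hγ hunst
end

section
/- Let a, b, r, F, γ > 0 with aγ > b, and let Ψ₀ ∈ ℝ and P₀ := (b/a)(Ψ₀ − r) + F (so the initial data lie on the slow manifold). For each ε > 0 let (P_ε, Ψ_ε) : [0, ∞) → ℝ² be the solution of the Beja–Goldman system P' = (1/ε)(a(F − P) + b(Ψ − r)), Ψ' = (1/γ)(P' − Ψ) with P_ε(0) = P₀, Ψ_ε(0) = Ψ₀, and let Ψ̄(t) := Ψ₀·exp(−(a/(aγ − b))·t) and P̄(t) := (b/a)(Ψ̄(t) − r) + F be the solution of the reduced system. Then for every t₀ > 0, sup over t ≥ t₀ of (|P_ε(t) − P̄(t)| + |Ψ_ε(t) − Ψ̄(t)|) tends to 0 as ε → 0⁺. -/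
/-!
The system is linear. If `μ` is a root of its characteristic polynomial
`ε γ μ² + (a γ - b + ε) μ + a`, the combination `a (γ μ + 1) U + b Ψ`, where
`U = P - ((b / a) (Ψ - r) + F)` is the distance to the slow manifold, evolves as `e^{μ t}`.
For small `ε` there is a slow root `μ = -a / (a γ - b) + O(ε)` and a fast root `ν` with
`μ - ν ≥ (a γ - b) / (2 ε γ)`. Comparing the two modes shows `U = O(ε)`, hence
`Ψ = Ψ₀ e^{μ t} + O(ε)`; and `|e^{μ t} - e^{-a t / (a γ - b)}| = O(ε)` because `t e^{-κ t}`
is bounded for `κ > 0`. Since the initial data lie on the slow manifold there is no initial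
layer, and all these bounds are uniform in `t ≥ 0`.
-/

open Real

lemma eq_mul_exp_of_hasDerivAt_mul {w : ℝ → ℝ} {c : ℝ}
    (hw : ∀ s ≥ (0 : ℝ), HasDerivAt w (c * w s) s) {t : ℝ} (ht : 0 ≤ t) :
    w t = w 0 * exp (c * t) := by
  have hderiv : ∀ s ≥ (0 : ℝ), HasDerivAt (fun s => w s * exp (-c * s)) 0 s := by
    intro s hs
    exact ((hw s hs).fun_mul ((hasDerivAt_id' s).const_mul (-c)).exp).congr_deriv (by ring)
  have hconst := constant_of_has_deriv_right_zero
    (fun s hs => (hderiv s hs.1).continuousAt.continuousWithinAt)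
    (fun s hs => (hderiv s hs.1).hasDerivWithinAt) t ⟨ht, le_rfl⟩
  simp only [mul_zero, exp_zero, mul_one] at hconst
  rw [← hconst, mul_assoc, ← exp_add]
  simp

lemma exp_mul_sub_exp_mul_le {μ ν : ℝ} (hμν : μ ≤ ν) (hν : ν < 0) (t : ℝ) :
    exp (ν * t) - exp (μ * t) ≤ (ν - μ) / -ν := by
  have hmvt : exp (ν * t) - exp (μ * t) ≤ (ν - μ) * (t * exp (ν * t)) := by
    have hsplit : exp (μ * t) = exp (ν * t) * exp (-((ν - μ) * t)) := by
      rw [← exp_add]; ring_nf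
    nlinarith [one_sub_le_exp_neg ((ν - μ) * t), exp_pos (ν * t)]
  have hdecay : t * exp (ν * t) ≤ 1 / -ν := by
    rw [le_div_iff₀ (neg_pos.2 hν)]
    have h := mul_exp_neg_le_exp_neg_one (-ν * t)
    rw [neg_mul, neg_neg] at h
    nlinarith [exp_le_one_iff.2 (by norm_num : (-1 : ℝ) ≤ 0)]
  calc exp (ν * t) - exp (μ * t) ≤ (ν - μ) * (1 / -ν) :=
        hmvt.trans (mul_le_mul_of_nonneg_left hdecay (sub_nonneg.2 hμν))
    _ = (ν - μ) / -ν := by ring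

lemma exists_slow_fast_roots {a d γ ε : ℝ} (ha : 0 < a) (hd : 0 < d) (hdγ : d < a * γ)
    (hε : 0 < ε) (hsmall : 8 * ε * γ * a ≤ d ^ 2) :
    ∃ μ ν : ℝ, ε * γ * μ ^ 2 + (d + ε) * μ + a = 0 ∧ ε * γ * ν ^ 2 + (d + ε) * ν + a = 0 ∧
      -(2 * (a / d)) < μ ∧ μ < -(a / d) ∧ d / (2 * (ε * γ)) ≤ μ - ν := by
  have hγ : 0 < γ := pos_of_mul_pos_right (hd.trans hdγ) ha.le
  set q : ℝ → ℝ := fun x => ε * γ * x ^ 2 + (d + ε) * x + a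
  have hq_slow : 0 < q (-(a / d)) := by
    have hval : q (-(a / d)) = ε * a * (a * γ - d) / d ^ 2 := by simp only [q]; field_simp; ring
    rw [hval]; have := sub_pos.2 hdγ; positivity
  have hq_fast : q (-(2 * (a / d))) < 0 := by
    have hval : q (-(2 * (a / d))) = a * (4 * ε * γ * a - d ^ 2 - 2 * ε * d) / d ^ 2 := by
      simp only [q]; field_simp; ring
    rw [hval]
    exact div_neg_of_neg_of_pos (mul_neg_of_pos_of_neg ha (by nlinarith)) (by positivity)
  obtain ⟨μ, ⟨hμl, hμr⟩, hμ⟩ := intermediate_value_Ioo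
    (by linarith [div_pos ha hd] : -(2 * (a / d)) ≤ -(a / d))
    (by fun_prop : Continuous q).continuousOn ⟨hq_fast, hq_slow⟩
  refine ⟨μ, -((d + ε) / (ε * γ)) - μ, hμ, ?_, hμl, hμr, ?_⟩
  · -- Vieta: the two roots sum to `-(d + ε) / (ε * γ)`
    have hμ' : ε * γ * μ ^ 2 + (d + ε) * μ + a = 0 := hμ
    field_simp
    linear_combination ε * γ * hμ'
  · have hslow : 4 * (a / d) ≤ d / (2 * (ε * γ)) := by
      rw [← mul_div_assoc, div_le_div_iff₀ hd (by positivity)]; nlinarith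
    have hsum : d / (ε * γ) ≤ (d + ε) / (ε * γ) := by gcongr; linarith
    have hhalf : d / (2 * (ε * γ)) = d / (ε * γ) - d / (2 * (ε * γ)) := by field_simp; ring
    linarith

lemma neg_div_sub_le_of_slow_root {a d γ ε μ : ℝ} (hd : 0 < d) (hε : 0 < ε) (hγ : 0 ≤ γ)
    (hμ : ε * γ * μ ^ 2 + (d + ε) * μ + a = 0) (hμl : -(2 * (a / d)) < μ) (hμ0 : μ < 0) :
    -(a / d) - μ ≤ ε * (4 * γ * a ^ 2 / d ^ 3) := by
  have hperturb : -(a / d) - μ = (ε * γ * μ ^ 2 + ε * μ) / d := by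
    field_simp; linear_combination -hμ
  have hμsq : μ ^ 2 ≤ (2 * (a / d)) ^ 2 := by nlinarith
  rw [hperturb, div_le_iff₀ hd]
  calc ε * γ * μ ^ 2 + ε * μ ≤ ε * γ * (2 * (a / d)) ^ 2 := by
        nlinarith [mul_le_mul_of_nonneg_left hμsq (by positivity : 0 ≤ ε * γ)]
    _ = ε * (4 * γ * a ^ 2 / d ^ 3) * d := by field_simp; ring

def IsBejaGoldmanSolution (a b r F γ ε : ℝ) (P Ψ : ℝ → ℝ) : Prop :=
  ∀ t ≥ (0 : ℝ), HasDerivAt P ((1 / ε) * (a * (F - P t) + b * (Ψ t - r))) t ∧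
    HasDerivAt Ψ ((1 / γ) * ((1 / ε) * (a * (F - P t) + b * (Ψ t - r)) - Ψ t)) t

namespace IsBejaGoldmanSolution

variable {a b r F γ ε μ t : ℝ} {P Ψ : ℝ → ℝ}

/-- `(a (γ μ + 1), b)` is a left eigenvector, for the eigenvalue `μ`, of the system written in
the coordinates `(P - ((b / a) (Ψ - r) + F), Ψ)`. -/
lemma eigenmode_eq (hsol : IsBejaGoldmanSolution a b r F γ ε P Ψ) (ha : a ≠ 0) (hγ : γ ≠ 0)
    (hε : ε ≠ 0) (h0 : P 0 = (b / a) * (Ψ 0 - r) + F)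
    (hμ : ε * γ * μ ^ 2 + (a * γ - b + ε) * μ + a = 0) (ht : 0 ≤ t) :
    a * (γ * μ + 1) * (P t - ((b / a) * (Ψ t - r) + F)) + b * Ψ t = b * Ψ 0 * exp (μ * t) := by
  have hw := eq_mul_exp_of_hasDerivAt_mul
    (w := fun s => a * (γ * μ + 1) * (P s - ((b / a) * (Ψ s - r) + F)) + b * Ψ s) (c := μ)
    (fun s hs => ?_) ht
  · simpa only [h0, sub_self, mul_zero, zero_add] using hw
  obtain ⟨hP, hΨ⟩ := hsol s hs
  refine (((hP.sub (((hΨ.sub_const r).const_mul (b / a)).add_const F)).const_mul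
    (a * (γ * μ + 1))).add (hΨ.const_mul b)).congr_deriv ?_
  field_simp
  linear_combination (γ * (a * (F - P s) + b * (Ψ s - r))) * hμ

lemma abs_sub_slowManifold_le (hsol : IsBejaGoldmanSolution a b r F γ ε P Ψ) (ha : 0 < a)
    (hb : 0 ≤ b) (hγ : 0 < γ) (hε : 0 < ε) (h0 : P 0 = (b / a) * (Ψ 0 - r) + F) {ν : ℝ}
    (hμ : ε * γ * μ ^ 2 + (a * γ - b + ε) * μ + a = 0)
    (hν : ε * γ * ν ^ 2 + (a * γ - b + ε) * ν + a = 0) (hνμ : ν < μ) (hμ0 : μ ≤ 0)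
    (ht : 0 ≤ t) :
    |P t - ((b / a) * (Ψ t - r) + F)| ≤ b * |Ψ 0| / (a * γ * (μ - ν)) := by
  have hsep : a * γ * (μ - ν) * (P t - ((b / a) * (Ψ t - r) + F)) =
      b * Ψ 0 * (exp (μ * t) - exp (ν * t)) := by
    linear_combination hsol.eigenmode_eq ha.ne' hγ.ne' hε.ne' h0 hμ ht -
      hsol.eigenmode_eq ha.ne' hγ.ne' hε.ne' h0 hν ht
  have hexp : |exp (μ * t) - exp (ν * t)| ≤ 1 :=
    abs_sub_le_of_nonneg_of_le (exp_pos _).le (exp_le_one_iff.2 (by nlinarith))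
      (exp_pos _).le (exp_le_one_iff.2 (by nlinarith))
  have hpos : 0 < a * γ * (μ - ν) := by have := sub_pos.2 hνμ; positivity
  rw [le_div_iff₀ hpos, ← abs_of_pos hpos, ← abs_mul, mul_comm, hsep, abs_mul, abs_mul,
    abs_of_nonneg hb]
  exact mul_le_of_le_one_right (by positivity) hexp

lemma abs_sub_mul_exp_le (hsol : IsBejaGoldmanSolution a b r F γ ε P Ψ) (ha : 0 < a)
    (hb : 0 < b) (hγ : 0 < γ) (hε : 0 < ε) (h0 : P 0 = (b / a) * (Ψ 0 - r) + F) {κ : ℝ}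
    (hμ : ε * γ * μ ^ 2 + (a * γ - b + ε) * μ + a = 0) (hμκ : μ ≤ κ) (hκ : κ < 0)
    (ht : 0 ≤ t) :
    |Ψ t - Ψ 0 * exp (κ * t)| ≤
      a * |γ * μ + 1| / b * |P t - ((b / a) * (Ψ t - r) + F)| + |Ψ 0| * ((κ - μ) / -κ) := by
  have hmode : Ψ t - Ψ 0 * exp (μ * t) =
      -(a * (γ * μ + 1) / b * (P t - ((b / a) * (Ψ t - r) + F))) := by
    have hmode := hsol.eigenmode_eq ha.ne' hγ.ne' hε.ne' h0 hμ ht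
    generalize P t - ((b / a) * (Ψ t - r) + F) = U at hmode ⊢
    field_simp
    linear_combination hmode
  have hexp : |Ψ 0 * exp (μ * t) - Ψ 0 * exp (κ * t)| ≤ |Ψ 0| * ((κ - μ) / -κ) := by
    rw [← mul_sub, abs_mul, abs_sub_comm]
    gcongr
    rw [abs_of_nonneg (sub_nonneg.2 (exp_le_exp.2 _))]
    · exact exp_mul_sub_exp_mul_le hμκ hκ t
    · exact mul_le_mul_of_nonneg_right hμκ ht
  calc |Ψ t - Ψ 0 * exp (κ * t)|
      ≤ |Ψ t - Ψ 0 * exp (μ * t)| + |Ψ 0 * exp (μ * t) - Ψ 0 * exp (κ * t)| := abs_sub_le _ _ _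
    _ ≤ _ := by
      rw [hmode, abs_neg, abs_mul, abs_div, abs_mul, abs_of_pos ha, abs_of_pos hb]
      gcongr

theorem exists_abs_sub_reduced_le (ha : 0 < a) (hb : 0 < b) (hab : b < a * γ) :
    ∃ C ≥ (0 : ℝ), ∀ ε > (0 : ℝ), 8 * ε * γ * a ≤ (a * γ - b) ^ 2 → ∀ P Ψ : ℝ → ℝ,
      IsBejaGoldmanSolution a b r F γ ε P Ψ → P 0 = (b / a) * (Ψ 0 - r) + F → ∀ t ≥ (0 : ℝ),
      |P t - ((b / a) * (Ψ 0 * exp (-(a / (a * γ - b)) * t) - r) + F)| +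
        |Ψ t - Ψ 0 * exp (-(a / (a * γ - b)) * t)| ≤ C * |Ψ 0| * ε := by
  set d := a * γ - b
  have hd : 0 < d := sub_pos.2 hab
  have hγ : 0 < γ := pos_of_mul_pos_right (hb.trans hab) ha.le
  refine ⟨2 * b / (a * d) + (1 + b / a) * ((2 * d + 8 * γ * a) / d ^ 2), by positivity, ?_⟩
  intro ε hε hsmall P Ψ hsol h0 t ht
  obtain ⟨μ, ν, hμ, hν, hμl, hμr, hgap⟩ := exists_slow_fast_roots ha hd (by linarith) hε hsmall
  have hμ0 : μ < 0 := hμr.trans (neg_neg_of_pos (div_pos ha hd))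
  have hU := hsol.abs_sub_slowManifold_le ha hb.le hγ hε h0 hμ hν
    (by linarith [show 0 < d / (2 * (ε * γ)) by positivity]) hμ0.le ht
  have hE := hsol.abs_sub_mul_exp_le ha hb hγ hε h0 hμ hμr.le (neg_neg_of_pos (div_pos ha hd)) ht
  have hclose := neg_div_sub_le_of_slow_root hd hε hγ.le hμ hμl hμ0
  set U := P t - ((b / a) * (Ψ t - r) + F)
  set E := Ψ t - Ψ 0 * exp (-(a / d) * t)
  have hU' : |U| ≤ 2 * b / (a * d) * |Ψ 0| * ε :=
    calc |U| ≤ b * |Ψ 0| / (a * γ * (d / (2 * (ε * γ)))) := hU.trans (by gcongr)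
      _ = 2 * b / (a * d) * |Ψ 0| * ε := by field_simp
  have hγμ : |γ * μ + 1| ≤ 1 + 2 * γ * a / d := by
    have hlow : γ * -(2 * (a / d)) < γ * μ := mul_lt_mul_of_pos_left hμl hγ
    have hup : γ * μ < 0 := mul_neg_of_pos_of_neg hγ hμ0
    rw [show γ * -(2 * (a / d)) = -(2 * γ * a / d) by ring] at hlow
    rw [abs_le]
    constructor <;> linarith
  have hE' : |E| ≤ (2 * d + 8 * γ * a) / d ^ 2 * |Ψ 0| * ε :=
    calc |E| ≤ a * |γ * μ + 1| / b * |U| + |Ψ 0| * ((-(a / d) - μ) / -(-(a / d))) := hE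
      _ ≤ a * (1 + 2 * γ * a / d) / b * (2 * b / (a * d) * |Ψ 0| * ε) +
          |Ψ 0| * (ε * (4 * γ * a ^ 2 / d ^ 3) / (a / d)) := by
        rw [neg_neg]; gcongr
      _ = (2 * d + 8 * γ * a) / d ^ 2 * |Ψ 0| * ε := by field_simp; ring
  have hP : P t - ((b / a) * (Ψ 0 * exp (-(a / d) * t) - r) + F) = U + b / a * E := by ring
  calc |P t - ((b / a) * (Ψ 0 * exp (-(a / d) * t) - r) + F)| + |E|
      ≤ |U| + b / a * |E| + |E| := by
        rw [hP]
        gcongr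
        exact (abs_add_le _ _).trans_eq (by rw [abs_mul, abs_of_pos (div_pos hb ha)])
    _ ≤ 2 * b / (a * d) * |Ψ 0| * ε + b / a * ((2 * d + 8 * γ * a) / d ^ 2 * |Ψ 0| * ε) +
          (2 * d + 8 * γ * a) / d ^ 2 * |Ψ 0| * ε := by gcongr
    _ = _ := by ring

end IsBejaGoldmanSolution

theorem beja_goldman_liquid_market_tikhonov_general
    (a b r F γ : ℝ) (ha : 0 < a) (hb : 0 < b)
    (hγ : 0 < γ) (hstab : a * γ > b)
    (Ψ₀ P₀ : ℝ) (hP₀ : P₀ = (b / a) * (Ψ₀ - r) + F)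
    (P Ψ : ℝ → ℝ → ℝ)
    (hode : ∀ ε > (0 : ℝ), ∀ t ≥ (0 : ℝ),
      HasDerivAt (P ε) ((1 / ε) * (a * (F - P ε t) + b * (Ψ ε t - r))) t ∧
      HasDerivAt (Ψ ε)
        ((1 / γ) * ((1 / ε) * (a * (F - P ε t) + b * (Ψ ε t - r)) - Ψ ε t)) t)
    (hinit : ∀ ε > (0 : ℝ), P ε 0 = P₀ ∧ Ψ ε 0 = Ψ₀)
    (Ψbar Pbar : ℝ → ℝ)
    (hΨbar : Ψbar = fun t => Ψ₀ * Real.exp (-(a / (a * γ - b)) * t))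
    (hPbar : Pbar = fun t => (b / a) * (Ψbar t - r) + F) :
    ∀ t₀ > (0 : ℝ), ∀ δ > (0 : ℝ), ∃ ε₀ > (0 : ℝ), ∀ ε : ℝ, 0 < ε → ε < ε₀ →
      ∀ t ≥ t₀, |P ε t - Pbar t| + |Ψ ε t - Ψbar t| < δ := by
  intro t₀ _ δ hδ
  subst hΨbar hPbar
  obtain ⟨C, hC, hbound⟩ :=
    IsBejaGoldmanSolution.exists_abs_sub_reduced_le (r := r) (F := F) ha hb hstab
  refine ⟨min ((a * γ - b) ^ 2 / (8 * γ * a)) (δ / (C * |Ψ₀| + 1)), by positivity,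
    fun ε hε hεε₀ t ht => ?_⟩
  have hsmall : 8 * ε * γ * a ≤ (a * γ - b) ^ 2 := by
    have := (lt_min_iff.1 hεε₀).1
    rw [lt_div_iff₀ (by positivity)] at this
    linarith
  have hεδ : C * |Ψ₀| * ε < δ := by
    have := (lt_min_iff.1 hεε₀).2
    rw [lt_div_iff₀ (by positivity)] at this
    nlinarith [abs_nonneg Ψ₀]
  obtain ⟨hP0, hΨ0⟩ := hinit ε hε
  have hεt := hbound ε hε hsmall (P ε) (Ψ ε) (hode ε hε) (by rw [hP0, hΨ0, hP₀]) t (by linarith)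
  rw [hΨ0] at hεt
  exact hεt.trans_lt hεδ

/-- for `aγ > b` and initial data on the slow manifold, the
solutions of the full Beja–Goldman system converge, uniformly on `[t₀, ∞)` for
every `t₀ > 0`, to the solution of the reduced liquid-market system as `ε → 0⁺`. -/
theorem beja_goldman_liquid_market_tikhonov
    (a b r F γ : ℝ) (ha : 0 < a) (hb : 0 < b) (hr : 0 < r) (hF : 0 < F)
    (hγ : 0 < γ) (hstab : a * γ > b)
    (Ψ₀ P₀ : ℝ) (hP₀ : P₀ = (b / a) * (Ψ₀ - r) + F)
    (P Ψ : ℝ → ℝ → ℝ)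
    (hode : ∀ ε > (0 : ℝ), ∀ t ≥ (0 : ℝ),
      HasDerivAt (P ε) ((1 / ε) * (a * (F - P ε t) + b * (Ψ ε t - r))) t ∧
      HasDerivAt (Ψ ε)
        ((1 / γ) * ((1 / ε) * (a * (F - P ε t) + b * (Ψ ε t - r)) - Ψ ε t)) t)
    (hinit : ∀ ε > (0 : ℝ), P ε 0 = P₀ ∧ Ψ ε 0 = Ψ₀)
    (Ψbar Pbar : ℝ → ℝ)
    (hΨbar : Ψbar = fun t => Ψ₀ * Real.exp (-(a / (a * γ - b)) * t))
    (hPbar : Pbar = fun t => (b / a) * (Ψbar t - r) + F) :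
    ∀ t₀ > (0 : ℝ), ∀ δ > (0 : ℝ), ∃ ε₀ > (0 : ℝ), ∀ ε : ℝ, 0 < ε → ε < ε₀ →
      ∀ t ≥ t₀, |P ε t - Pbar t| + |Ψ ε t - Ψbar t| < δ :=
  beja_goldman_liquid_market_tikhonov_general a b r F γ ha hb hγ hstab Ψ₀ P₀ hP₀ P Ψ hode hinit Ψbar
    Pbar hΨbar hPbar
end

section
/- Let a, b, r, F, ε > 0 with ε > b, and let P₀ ∈ ℝ and Ψ₀ := (a(F − P₀) − rb)/(ε − b) (so the initial data lie on the slow manifold). For each γ > 0 let (P_γ, Ψ_γ) : [0, ∞) → ℝ² be the solution of the Beja–Goldman system P' = (1/ε)(a(F − P) + b(Ψ − r)), Ψ' = (1/γ)(P' − Ψ) with P_γ(0) = P₀, Ψ_γ(0) = Ψ₀, and let P̄(t) := exp(−(a/(ε − b))·t)·(P₀ − (F − rb/a)) + F − rb/a and Ψ̄(t) := (a(F − P̄(t)) − rb)/(ε − b) be the solution of the reduced system. Then for every t₀ > 0, sup over t ≥ t₀ of (|P_γ(t) − P̄(t)| + |Ψ_γ(t) − Ψ̄(t)|) tends to 0 as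 γ → 0⁺. -/
/-!
In the coordinates `q = (a (F - P) - r b) / (ε - b)`, the value of `Ψ` on the slow manifold over
`P`, and `w = Ψ - q`, the system becomes `q' = -μ (q + β w)`, `w' = μ q - κ w`, where
`μ = a / (ε - b)`, `β = b / ε` and `κ = (1 - β) / γ - μ β → ∞` as `γ → 0⁺`. Once `κ` is large the
energy `q² + w²` is nonincreasing, so `|q| ≤ |Ψ₀|`. With `w(0) = 0`, the linear equation for `w`
then gives `|w| ≤ μ |Ψ₀| / κ`, and comparing `q` with the reduced solution `e^{-μ t} Ψ₀` gives
`|q - e^{-μ t} Ψ₀| ≤ |β| μ |Ψ₀| / κ`. Both bounds hold uniformly for `t ≥ 0` and are `O(γ)`.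
-/

open Set Filter Topology Real

theorem nonpos_of_hasDerivAt_le_neg_mul {z z' : ℝ → ℝ} {κ t : ℝ}
    (hz : ∀ s ≥ 0, HasDerivAt z (z' s) s) (hz' : ∀ s ≥ 0, z' s ≤ -κ * z s)
    (h0 : z 0 ≤ 0) (ht : 0 ≤ t) : z t ≤ 0 := by
  have hd : ∀ s ≥ 0, HasDerivAt (fun s => exp (κ * s) * z s)
      (exp (κ * s) * (z' s + κ * z s)) s := fun s hs =>
    (((hasDerivAt_id' s).const_mul κ).exp.mul (hz s hs)).congr_deriv (by ring)
  have hanti : AntitoneOn (fun s => exp (κ * s) * z s) (Ici 0) :=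
    antitoneOn_of_hasDerivWithinAt_nonpos (convex_Ici 0)
      (fun s hs => (hd s hs).continuousAt.continuousWithinAt)
      (fun s hs => (hd s (interior_subset hs)).hasDerivWithinAt)
      fun s hs => mul_nonpos_of_nonneg_of_nonpos (exp_pos _).le
        (by linarith [hz' s (interior_subset hs)])
  have h := hanti self_mem_Ici ht ht
  simp only [mul_zero, exp_zero, one_mul] at h
  exact nonpos_of_mul_nonpos_right (h.trans h0) (exp_pos _)

theorem abs_le_div_of_hasDerivAt_eq_neg_mul_add {y g : ℝ → ℝ} {κ M t : ℝ} (hκ : κ ≠ 0)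
    (hy : ∀ s ≥ 0, HasDerivAt y (-κ * y s + g s) s) (hg : ∀ s ≥ 0, |g s| ≤ M)
    (h0 : |y 0| ≤ M / κ) (ht : 0 ≤ t) : |y t| ≤ M / κ := by
  have hM : κ * (M / κ) = M := mul_div_cancel₀ M hκ
  rw [abs_le] at h0 ⊢
  constructor
  · have := nonpos_of_hasDerivAt_le_neg_mul (κ := κ) (z := fun s => -y s - M / κ)
      (fun s hs => (hy s hs).neg.sub_const _)
      (fun s hs => by linarith [(abs_le.mp (hg s hs)).1]) (by linarith) ht
    linarith
  · have := nonpos_of_hasDerivAt_le_neg_mul (κ := κ) (z := fun s => y s - M / κ)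
      (fun s hs => (hy s hs).sub_const _)
      (fun s hs => by linarith [(abs_le.mp (hg s hs)).2]) (by linarith) ht
    linarith

def IsSlowFastSolution (μ β κ : ℝ) (q w : ℝ → ℝ) : Prop :=
  ∀ s ≥ 0, HasDerivAt q (-μ * q s - μ * β * w s) s ∧ HasDerivAt w (μ * q s - κ * w s) s

section SlowFast

variable {μ β κ t : ℝ} {q w : ℝ → ℝ}

theorem IsSlowFastSolution.sq_add_sq_le (h : IsSlowFastSolution μ β κ q w) (hμ : 0 ≤ μ)
    (hκ : μ * (1 - β) ^ 2 ≤ 4 * κ) (ht : 0 ≤ t) :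
    q t ^ 2 + w t ^ 2 ≤ q 0 ^ 2 + w 0 ^ 2 := by
  have := nonpos_of_hasDerivAt_le_neg_mul (κ := 0)
    (z := fun s => q s ^ 2 + w s ^ 2 - (q 0 ^ 2 + w 0 ^ 2))
    (fun s hs => (((h s hs).1.pow 2).add ((h s hs).2.pow 2)).sub_const _)
    (fun s _ => by
      -- `-μ q² + μ (1 - β) q w - κ w²` is negative semidefinite
      simp only [Nat.cast_ofNat, Nat.add_one_sub_one, pow_one, neg_zero, zero_mul]
      nlinarith [mul_nonneg hμ (sq_nonneg (q s - (1 - β) * w s / 2)),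
        mul_nonneg (sub_nonneg.2 hκ) (sq_nonneg (w s))])
    (sub_self _).le ht
  linarith

theorem IsSlowFastSolution.abs_fast_le (h : IsSlowFastSolution μ β κ q w) (hμ : 0 ≤ μ)
    (hκ₀ : 0 < κ) (hκ : μ * (1 - β) ^ 2 ≤ 4 * κ) (hw₀ : w 0 = 0) (ht : 0 ≤ t) :
    |w t| ≤ μ * |q 0| / κ := by
  refine abs_le_div_of_hasDerivAt_eq_neg_mul_add hκ₀.ne' (g := fun s => μ * q s)
    (fun s hs => (h s hs).2.congr_deriv (by ring)) (fun s hs => ?_)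
    (by rw [hw₀, abs_zero]; positivity) ht
  have hq : |q s| ≤ |q 0| := sq_le_sq.mp (by nlinarith [h.sq_add_sq_le hμ hκ hs, sq_nonneg (w s)])
  rw [abs_mul, abs_of_nonneg hμ]
  exact mul_le_mul_of_nonneg_left hq hμ

theorem IsSlowFastSolution.abs_slow_sub_le (h : IsSlowFastSolution μ β κ q w) (hμ : 0 < μ)
    (hκ₀ : 0 < κ) (hκ : μ * (1 - β) ^ 2 ≤ 4 * κ) (hw₀ : w 0 = 0) (ht : 0 ≤ t) :
    |q t - exp (-μ * t) * q 0| ≤ |β| * (μ * |q 0| / κ) := by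
  have hexp (s : ℝ) : HasDerivAt (fun s => exp (-μ * s) * q 0) (-μ * (exp (-μ * s) * q 0)) s :=
    (((hasDerivAt_id' s).const_mul (-μ)).exp.mul_const (q 0)).congr_deriv (by ring)
  have := abs_le_div_of_hasDerivAt_eq_neg_mul_add hμ.ne'
    (y := fun s => q s - exp (-μ * s) * q 0) (g := fun s => -μ * β * w s)
    (M := μ * (|β| * (μ * |q 0| / κ)))
    (fun s hs => ((h s hs).1.sub (hexp s)).congr_deriv (by ring))
    (fun s hs => by
      rw [abs_mul, abs_mul, abs_neg, abs_of_pos hμ, mul_assoc]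
      exact mul_le_mul_of_nonneg_left
        (mul_le_mul_of_nonneg_left (h.abs_fast_le hμ.le hκ₀ hκ hw₀ hs) (abs_nonneg β)) hμ.le)
    (by simp only [mul_zero, exp_zero, one_mul, sub_self, abs_zero]; positivity) ht
  rwa [mul_div_cancel_left₀ _ hμ.ne'] at this

end SlowFast

namespace BejaGoldman

noncomputable def slowManifold (a b r F ε p : ℝ) : ℝ := (a * (F - p) - r * b) / (ε - b)

variable {a b r F ε : ℝ}

theorem slowManifold_sub_slowManifold (p p' : ℝ) :
    slowManifold a b r F ε p - slowManifold a b r F ε p' = -(a / (ε - b)) * (p - p') := by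
  unfold slowManifold
  ring

theorem slowManifold_reducedSolution (ha : a ≠ 0) (P₀ t : ℝ) :
    slowManifold a b r F ε (exp (-(a / (ε - b)) * t) * (P₀ - (F - r * b / a)) + F - r * b / a)
      = exp (-(a / (ε - b)) * t) * slowManifold a b r F ε P₀ := by
  unfold slowManifold
  field_simp
  ring

theorem isSlowFastSolution {γ : ℝ} {P Ψ : ℝ → ℝ} (hε : ε ≠ 0) (hεb : ε ≠ b)
    (hode : ∀ t ≥ (0 : ℝ),
      HasDerivAt P ((1 / ε) * (a * (F - P t) + b * (Ψ t - r))) t ∧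
      HasDerivAt Ψ ((1 / γ) * ((1 / ε) * (a * (F - P t) + b * (Ψ t - r)) - Ψ t)) t) :
    IsSlowFastSolution (a / (ε - b)) (b / ε) ((1 - b / ε) / γ - a / (ε - b) * (b / ε))
      (fun s => slowManifold a b r F ε (P s)) (fun s => Ψ s - slowManifold a b r F ε (P s)) := by
  intro s hs
  obtain ⟨hP, hΨ⟩ := hode s hs
  have hεb' : ε - b ≠ 0 := sub_ne_zero.2 hεb
  have hfield : (1 / ε) * (a * (F - P s) + b * (Ψ s - r))
      = slowManifold a b r F ε (P s) + b / ε * (Ψ s - slowManifold a b r F ε (P s)) := by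
    unfold slowManifold
    field_simp
    ring
  have hq : HasDerivAt (fun s => slowManifold a b r F ε (P s))
      (-(a / (ε - b)) * ((1 / ε) * (a * (F - P s) + b * (Ψ s - r)))) s :=
    (((hP.const_sub F).const_mul a).sub_const (r * b)).div_const (ε - b) |>.congr_deriv (by ring)
  rw [hfield] at hq hΨ
  exact ⟨hq.congr_deriv (by ring), (hΨ.sub hq).congr_deriv (by ring)⟩

theorem abs_sub_add_abs_sub_le {γ P₀ Ψ₀ μ β κ t : ℝ} {P Ψ Pbar Ψbar : ℝ → ℝ}
    (ha : 0 < a) (hε : ε ≠ 0) (hstab : ε > b)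
    (hμ : μ = a / (ε - b)) (hβ : β = b / ε) (hκ : κ = (1 - β) / γ - μ * β)
    (hκ₀ : 0 < κ) (hκμ : μ * (1 - β) ^ 2 ≤ 4 * κ)
    (hΨ₀ : Ψ₀ = (a * (F - P₀) - r * b) / (ε - b))
    (hode : ∀ t ≥ (0 : ℝ),
      HasDerivAt P ((1 / ε) * (a * (F - P t) + b * (Ψ t - r))) t ∧
      HasDerivAt Ψ ((1 / γ) * ((1 / ε) * (a * (F - P t) + b * (Ψ t - r)) - Ψ t)) t)
    (hinit : P 0 = P₀ ∧ Ψ 0 = Ψ₀)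
    (hPbar : Pbar = fun t => exp (-(a / (ε - b)) * t) * (P₀ - (F - r * b / a)) + F - r * b / a)
    (hΨbar : Ψbar = fun t => (a * (F - Pbar t) - r * b) / (ε - b)) (ht : 0 ≤ t) :
    |P t - Pbar t| + |Ψ t - Ψbar t| ≤ (|β| / μ + |β| + 1) * (μ * |Ψ₀| / κ) := by
  have hμ₀ : 0 < μ := hμ ▸ div_pos ha (sub_pos.2 hstab)
  have hsol : IsSlowFastSolution μ β κ
      (fun s => slowManifold a b r F ε (P s)) (fun s => Ψ s - slowManifold a b r F ε (P s)) := by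
    subst hμ hβ hκ
    exact isSlowFastSolution hε hstab.ne' hode
  have hq₀ : slowManifold a b r F ε (P 0) = Ψ₀ := by rw [hinit.1, hΨ₀]; rfl
  have hw₀ : Ψ 0 - slowManifold a b r F ε (P 0) = 0 := by rw [hq₀, hinit.2, sub_self]
  have hslow := hsol.abs_slow_sub_le hμ₀ hκ₀ hκμ hw₀ ht
  have hfast := hsol.abs_fast_le hμ₀.le hκ₀ hκμ hw₀ ht
  simp only [hq₀] at hslow hfast
  have hΨbar_t : Ψbar t = exp (-μ * t) * Ψ₀ := by
    rw [hΨbar, hPbar, hΨ₀, hμ]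
    exact slowManifold_reducedSolution ha.ne' P₀ t
  have hPerr : P t - Pbar t = -(slowManifold a b r F ε (P t) - Ψbar t) / μ := by
    have hΨbar_eq : Ψbar t = slowManifold a b r F ε (Pbar t) := by rw [hΨbar]; rfl
    rw [hΨbar_eq, slowManifold_sub_slowManifold, ← hμ]
    field_simp
  have hΨerr : Ψ t - Ψbar t
      = (slowManifold a b r F ε (P t) - Ψbar t) + (Ψ t - slowManifold a b r F ε (P t)) := by
    ring
  rw [hPerr, hΨerr, hΨbar_t, abs_div, abs_neg, abs_of_pos hμ₀]
  set E := slowManifold a b r F ε (P t) - exp (-μ * t) * Ψ₀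
  set W := μ * |Ψ₀| / κ
  calc |E| / μ + |E + (Ψ t - slowManifold a b r F ε (P t))|
      ≤ |β| * W / μ + (|β| * W + W) := by
        gcongr
        exact (abs_add_le _ _).trans (add_le_add hslow hfast)
    _ = (|β| / μ + |β| + 1) * W := by ring

end BejaGoldman

theorem beja_goldman_liquid_chartist_tikhonov_general
    (a b r F ε : ℝ) (ha : 0 < a)
    (hε : 0 < ε) (hstab : ε > b)
    (P₀ Ψ₀ : ℝ) (hΨ₀ : Ψ₀ = (a * (F - P₀) - r * b) / (ε - b))
    (P Ψ : ℝ → ℝ → ℝ)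
    (hode : ∀ γ > (0 : ℝ), ∀ t ≥ (0 : ℝ),
      HasDerivAt (P γ) ((1 / ε) * (a * (F - P γ t) + b * (Ψ γ t - r))) t ∧
      HasDerivAt (Ψ γ)
        ((1 / γ) * ((1 / ε) * (a * (F - P γ t) + b * (Ψ γ t - r)) - Ψ γ t)) t)
    (hinit : ∀ γ > (0 : ℝ), P γ 0 = P₀ ∧ Ψ γ 0 = Ψ₀)
    (Pbar Ψbar : ℝ → ℝ)
    (hPbar : Pbar = fun t => Real.exp (-(a / (ε - b)) * t) * (P₀ - (F - r * b / a))
      + F - r * b / a)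
    (hΨbar : Ψbar = fun t => (a * (F - Pbar t) - r * b) / (ε - b)) :
    ∀ t₀ > (0 : ℝ), ∀ δ > (0 : ℝ), ∃ γ₀ > (0 : ℝ), ∀ γ : ℝ, 0 < γ → γ < γ₀ →
      ∀ t ≥ t₀, |P γ t - Pbar t| + |Ψ γ t - Ψbar t| < δ := by
  intro t₀ ht₀ δ hδ
  set μ := a / (ε - b) with hμ
  set β := b / ε with hβ
  have hβ₁ : 0 < 1 - β := by rwa [hβ, sub_pos, div_lt_one hε]
  have hκ : Tendsto (fun γ => (1 - β) / γ - μ * β) (𝓝[>] 0) atTop := by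
    simp only [div_eq_mul_inv (1 - β)]
    exact tendsto_atTop_add_const_right _ _ (tendsto_inv_nhdsGT_zero.const_mul_atTop hβ₁)
  have herr : Tendsto (fun γ => (|β| / μ + |β| + 1) * (μ * |Ψ₀| / ((1 - β) / γ - μ * β)))
      (𝓝[>] 0) (𝓝 0) := by
    simpa using (tendsto_const_nhds.div_atTop hκ).const_mul (|β| / μ + |β| + 1)
  obtain ⟨γ₀, hγ₀, hsmall⟩ := mem_nhdsGT_iff_exists_Ioo_subset.mp
    ((hκ.eventually_gt_atTop 0).and
      ((hκ.eventually_ge_atTop (μ * (1 - β) ^ 2 / 4)).and (herr.eventually (gt_mem_nhds hδ))))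
  refine ⟨γ₀, hγ₀, fun γ hγ hγγ₀ t ht => ?_⟩
  obtain ⟨hκ₀, hκμ, hlt⟩ := hsmall ⟨hγ, hγγ₀⟩
  exact (BejaGoldman.abs_sub_add_abs_sub_le ha hε.ne' hstab hμ hβ rfl hκ₀ (by linarith) hΨ₀
    (hode γ hγ) (hinit γ hγ) hPbar hΨbar (ht₀.le.trans ht)).trans_lt hlt

/-- for `ε > b` and initial data on the slow manifold, the
solutions of the full Beja–Goldman system converge, uniformly on `[t₀, ∞)` for
every `t₀ > 0`, to the solution of the reduced liquid-chartist system as `γ → 0⁺`. -/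
theorem beja_goldman_liquid_chartist_tikhonov
    (a b r F ε : ℝ) (ha : 0 < a) (hb : 0 < b) (hr : 0 < r) (hF : 0 < F)
    (hε : 0 < ε) (hstab : ε > b)
    (P₀ Ψ₀ : ℝ) (hΨ₀ : Ψ₀ = (a * (F - P₀) - r * b) / (ε - b))
    (P Ψ : ℝ → ℝ → ℝ)
    (hode : ∀ γ > (0 : ℝ), ∀ t ≥ (0 : ℝ),
      HasDerivAt (P γ) ((1 / ε) * (a * (F - P γ t) + b * (Ψ γ t - r))) t ∧
      HasDerivAt (Ψ γ)
        ((1 / γ) * ((1 / ε) * (a * (F - P γ t) + b * (Ψ γ t - r)) - Ψ γ t)) t)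
    (hinit : ∀ γ > (0 : ℝ), P γ 0 = P₀ ∧ Ψ γ 0 = Ψ₀)
    (Pbar Ψbar : ℝ → ℝ)
    (hPbar : Pbar = fun t => Real.exp (-(a / (ε - b)) * t) * (P₀ - (F - r * b / a))
      + F - r * b / a)
    (hΨbar : Ψbar = fun t => (a * (F - Pbar t) - r * b) / (ε - b)) :
    ∀ t₀ > (0 : ℝ), ∀ δ > (0 : ℝ), ∃ γ₀ > (0 : ℝ), ∀ γ : ℝ, 0 < γ → γ < γ₀ →
      ∀ t ≥ t₀, |P γ t - Pbar t| + |Ψ γ t - Ψbar t| < δ :=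
  beja_goldman_liquid_chartist_tikhonov_general a b r F ε ha hε hstab P₀ Ψ₀ hΨ₀ P Ψ hode hinit Pbar
    Ψbar hPbar hΨbar
end
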